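/- There exists a universal constant c > 0 (one may take c = 1/25600) such that for every even integer s ≥ 16 and every integer n ≥ s, in the outlier-free categorical model the minimax total-variation risk satisfies: inf over all measurable estimators θ̄_n : {e_1,…,e_s}^n → Δ^{s-1} of sup over θ ∈ Δ^{s-1} of E_θ[d_TV(θ̄_n(X_1,…,X_n), θ)] ≥ c (s/n)^{1/2}, where under E_θ the observations X_1,…,X_n are i.i.d. with P(X_i = e_j) = θ_j for j = 1,…,s. -/

import Mathlib

open MeasureTheory ProbabilityTheory

noncomputable section

/-- The probability simplex `Δ^{s-1}` in `ℝ^s`. -/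
def simplex (s : ℕ) : Set (Fin s → ℝ) :=
  {v | (∀ j, 0 ≤ v j) ∧ ∑ j, v j = 1}

/-- Total variation distance between two points of the simplex. -/
def dTV {s : ℕ} (u v : Fin s → ℝ) : ℝ := (1 / 2) * ∑ j, |u j - v j|

/-- The `j`-th canonical basis vector of `ℝ^s`. -/
def basisVec (s : ℕ) (j : Fin s) : Fin s → ℝ := fun i => if i = j then 1 else 0

/-- The categorical distribution on `{e_1, …, e_s}` with weights `θ`. -/
def catMeasure (s : ℕ) (θ : Fin s → ℝ) : Measure (Fin s → ℝ) :=
  ∑ j : Fin s, ENNReal.ofReal (θ j) • Measure.dirac (basisVec s j)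

/-! Assouad's method. Split the `s = 2m` categories into `m` pairs and, for each vertex `τ` of the
hypercube `{0,1}^m`, move mass `δ/(2m)` inside the `k`-th pair in the direction `τ k`, with
`δ = √(s/n)/4`. Neighbouring vertices differ in one pair only, so their Bhattacharyya coefficient
is at least `1 - δ²/m`; it tensorises, so by Bernoulli's inequality that of the `n`-fold products
is at least `7/8`, and their laws overlap by at least `49/128`. Comparing the two coordinates of
each pair turns any estimator into a guess of `τ`, each wrong sign costing `δ/(2m)` in total
variation, and Assouad's lemma forces `49m/256` wrong signs on average at some vertex. -/

open scoped ENNReal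

namespace MeasureTheory.Measure

theorem pi_sum_smul_dirac {ι α X : Type*} [Fintype ι] [DecidableEq ι] [Fintype α]
    [MeasurableSpace X] (w : α → ℝ≥0∞) (x : α → X) [SigmaFinite (∑ j, w j • dirac (x j))] :
    Measure.pi (fun _ : ι => ∑ j, w j • dirac (x j))
      = ∑ g : ι → α, (∏ i, w (g i)) • dirac (fun i => x (g i)) := by
  refine pi_eq fun A hA => ?_
  simp only [coe_finsetSum, Finset.sum_apply, smul_apply, smul_eq_mul,
    dirac_apply' _ (MeasurableSet.univ_pi hA), dirac_apply' _ (hA _)]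
  rw [Finset.prod_univ_sum]
  refine Finset.sum_congr rfl fun g _ => ?_
  rw [Finset.prod_mul_distrib, ← Finset.coe_univ, Set.indicator_pi_one_apply]

theorem integral_sum_smul_dirac {α X : Type*} [Fintype α] [MeasurableSpace X]
    [MeasurableSingletonClass X] {w : α → ℝ≥0∞} (hw : ∀ j, w j ≠ ∞) (x : α → X) (f : X → ℝ) :
    ∫ y, f y ∂(∑ j, w j • dirac (x j)) = ∑ j, (w j).toReal * f (x j) := by
  rw [integral_finsetSum_measure fun j _ => (integrable_dirac enorm_lt_top).smul_measure (hw j)]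
  simp [integral_smul_measure, integral_dirac]

end MeasureTheory.Measure

instance (s : ℕ) (θ : Fin s → ℝ) : IsFiniteMeasure (catMeasure s θ) := by
  have : ∀ j, IsFiniteMeasure (ENNReal.ofReal (θ j) • Measure.dirac (basisVec s j)) :=
    fun _ => (Measure.dirac _).smul_finite ENNReal.ofReal_ne_top
  unfold catMeasure
  infer_instance

theorem integral_pi_catMeasure {s n : ℕ} {θ : Fin s → ℝ} (hθ : ∀ j, 0 ≤ θ j)
    (f : (Fin n → Fin s → ℝ) → ℝ) :
    ∫ x, f x ∂(Measure.pi fun _ : Fin n => catMeasure s θ)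
      = ∑ g : Fin n → Fin s, (∏ i, θ (g i)) * f (fun i => basisVec s (g i)) := by
  have : IsFiniteMeasure (∑ j, ENNReal.ofReal (θ j) • Measure.dirac (basisVec s j)) :=
    inferInstanceAs (IsFiniteMeasure (catMeasure s θ))
  simp only [catMeasure]
  rw [Measure.pi_sum_smul_dirac,
    Measure.integral_sum_smul_dirac fun g => ENNReal.prod_ne_top fun i _ => ENNReal.ofReal_ne_top]
  simp [ENNReal.toReal_prod, ENNReal.toReal_ofReal (hθ _)]

section Bhattacharyya

variable {α : Type*} [Fintype α]

def bhattacharyya (p q : α → ℝ) : ℝ := ∑ j, √(p j * q j)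

theorem bhattacharyya_nonneg (p q : α → ℝ) : 0 ≤ bhattacharyya p q :=
  Finset.sum_nonneg fun _ _ => Real.sqrt_nonneg _

theorem sq_bhattacharyya_le {p q : α → ℝ} (hp : ∀ j, 0 ≤ p j) (hq : ∀ j, 0 ≤ q j) :
    bhattacharyya p q ^ 2 ≤ (∑ j, min (p j) (q j)) * ∑ j, (p j + q j) := calc
  bhattacharyya p q ^ 2 ≤ (∑ j, min (p j) (q j)) * ∑ j, max (p j) (q j) :=
    Finset.sum_sq_le_sum_mul_sum_of_sq_le_mul _ (fun j _ => le_min (hp j) (hq j))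
      (fun j _ => le_max_of_le_left (hp j))
      (fun j _ => by rw [Real.sq_sqrt (mul_nonneg (hp j) (hq j)), min_mul_max])
  _ ≤ (∑ j, min (p j) (q j)) * ∑ j, (p j + q j) := by
    gcongr with j
    · exact Finset.sum_nonneg fun j _ => le_min (hp j) (hq j)
    · exact max_le_add_of_nonneg (hp j) (hq j)

variable {ι : Type*} [Fintype ι] [DecidableEq ι]

theorem bhattacharyya_pi {p q : α → ℝ} (hp : ∀ j, 0 ≤ p j) (hq : ∀ j, 0 ≤ q j) :
    bhattacharyya (fun g : ι → α => ∏ i, p (g i)) (fun g => ∏ i, q (g i))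
      = bhattacharyya p q ^ Fintype.card ι := by
  simp only [bhattacharyya, ← Finset.prod_mul_distrib]
  rw [← Finset.card_univ, ← Finset.prod_const, Fintype.prod_sum]
  refine Finset.sum_congr rfl fun g _ => ?_
  exact Real.sqrt_prod _ fun i _ => mul_nonneg (hp _) (hq _)

theorem sq_one_sub_div_two_le_sum_min_pi {p q : α → ℝ} (hp : ∀ j, 0 ≤ p j) (hq : ∀ j, 0 ≤ q j)
    (hp₁ : ∑ j, p j = 1) (hq₁ : ∑ j, q j = 1) {ε : ℝ}
    (hε : Fintype.card ι * (1 - bhattacharyya p q) ≤ ε) (hε₁ : ε ≤ 1) :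
    (1 - ε) ^ 2 / 2 ≤ ∑ g : ι → α, min (∏ i, p (g i)) (∏ i, q (g i)) := by
  have hsum {r : α → ℝ} (hr : ∑ j, r j = 1) : ∑ g : ι → α, ∏ i, r (g i) = 1 := by
    rw [← Fintype.prod_sum, hr, Finset.prod_const_one]
  have hbernoulli : 1 - ε ≤ bhattacharyya p q ^ Fintype.card ι := by
    have := one_add_mul_le_pow (a := bhattacharyya p q - 1)
      (by linarith [bhattacharyya_nonneg p q]) (Fintype.card ι)
    rw [add_sub_cancel] at this
    linarith
  have hsq := sq_bhattacharyya_le (p := fun g : ι → α => ∏ i, p (g i))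
    (q := fun g => ∏ i, q (g i)) (fun g => Finset.prod_nonneg fun i _ => hp (g i))
    (fun g => Finset.prod_nonneg fun i _ => hq (g i))
  rw [bhattacharyya_pi hp hq, Finset.sum_add_distrib, hsum hp₁, hsum hq₁] at hsq
  nlinarith [pow_le_pow_left₀ (by linarith) hbernoulli 2]

end Bhattacharyya

section Assouad

variable {ι : Type*} [DecidableEq ι]

def flipAt (k : ι) (τ : ι → Bool) : ι → Bool := Function.update τ k (!τ k)

theorem flipAt_involutive (k : ι) : Function.Involutive (flipAt k) := fun τ => by
  simp [flipAt]

/-- Assouad's lemma, `W τ` being the law of the observation under the vertex `τ`. -/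
theorem exists_le_sum_mul_hammingDist [Fintype ι] {G : Type*} [Fintype G]
    {W : (ι → Bool) → G → ℝ} {η : ℝ} (hη : ∀ k τ, η ≤ ∑ g, min (W τ g) (W (flipAt k τ) g))
    (est : G → ι → Bool) :
    ∃ τ, Fintype.card ι * η / 2 ≤ ∑ g, W τ g * hammingDist (est g) τ := by
  let err (k : ι) (τ : ι → Bool) : ℝ := ∑ g, W τ g * if est g k ≠ τ k then 1 else 0
  have hpair (k : ι) (τ : ι → Bool) : η ≤ err k τ + err k (flipAt k τ) := by
    refine (hη k τ).trans ?_
    rw [← Finset.sum_add_distrib]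
    refine Finset.sum_le_sum fun g _ => ?_
    cases est g k <;> cases hτ : τ k <;> simp [flipAt, hτ]
  have hvertex (k : ι) : Fintype.card (ι → Bool) * η / 2 ≤ ∑ τ, err k τ := by
    have hflip : ∑ τ, err k (flipAt k τ) = ∑ τ, err k τ :=
      (flipAt_involutive k).bijective.sum_comp (err k)
    have := Finset.sum_le_sum fun τ (_ : τ ∈ Finset.univ) => hpair k τ
    rw [Finset.sum_add_distrib, hflip, Finset.sum_const, Finset.card_univ, nsmul_eq_mul] at this
    linarith
  have htotal : ∑ τ, ∑ g, W τ g * (hammingDist (est g) τ : ℝ) = ∑ k, ∑ τ, err k τ := by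
    rw [Finset.sum_comm (s := (Finset.univ : Finset ι))]
    refine Finset.sum_congr rfl fun τ _ => ?_
    simp only [hammingDist, Finset.natCast_card_filter, Finset.mul_sum, err]
    exact Finset.sum_comm
  obtain ⟨τ, -, hτ⟩ := Finset.exists_le_of_sum_le Finset.univ_nonempty
    (f := fun _ => Fintype.card ι * η / 2) (g := fun τ => ∑ g, W τ g * (hammingDist (est g) τ : ℝ))
    (by
      rw [htotal, Finset.sum_const, Finset.card_univ, nsmul_eq_mul]
      calc _ = ∑ k : ι, Fintype.card (ι → Bool) * η / 2 := by
            rw [Finset.sum_const, Finset.card_univ, nsmul_eq_mul]; ring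
        _ ≤ _ := Finset.sum_le_sum fun k _ => hvertex k)
  exact ⟨τ, hτ⟩

end Assouad

namespace Hypercube

def tilt (δ : ℝ) (b : Bool) : ℝ := if b then 1 + δ else 1 - δ

@[simp] theorem tilt_true (δ : ℝ) : tilt δ true = 1 + δ := rfl

@[simp] theorem tilt_false (δ : ℝ) : tilt δ false = 1 - δ := rfl

theorem tilt_add_tilt_not (δ : ℝ) (b : Bool) : tilt δ b + tilt δ (!b) = 2 := by
  cases b <;> simp [tilt] <;> ring

theorem tilt_mul_tilt_not (δ : ℝ) (b : Bool) : tilt δ b * tilt δ (!b) = 1 - δ ^ 2 := by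
  cases b <;> simp [tilt] <;> ring

theorem tilt_nonneg {δ : ℝ} (hδ : |δ| ≤ 1) (b : Bool) : 0 ≤ tilt δ b := by
  cases b <;> simp [tilt] <;> linarith [abs_le.mp hδ]

/-- The parameter indexed by a vertex `τ` of the hypercube: the masses of the categories `k` and
`m + k` are `(1 ± δ) / (2m)`, with the sign chosen by `τ k`. -/
def param (m : ℕ) (δ : ℝ) (τ : Fin m → Bool) : Fin (m + m) → ℝ :=
  Fin.addCases (fun k => tilt δ (τ k) / (m + m)) (fun k => tilt δ (!τ k) / (m + m))

@[simp] theorem param_castAdd (m : ℕ) (δ : ℝ) (τ : Fin m → Bool) (k : Fin m) :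
    param m δ τ (Fin.castAdd m k) = tilt δ (τ k) / (m + m) :=
  Fin.addCases_left k

@[simp] theorem param_natAdd (m : ℕ) (δ : ℝ) (τ : Fin m → Bool) (k : Fin m) :
    param m δ τ (Fin.natAdd m k) = tilt δ (!τ k) / (m + m) :=
  Fin.addCases_right k

theorem param_mem_simplex {m : ℕ} (hm : 0 < m) {δ : ℝ} (hδ : |δ| ≤ 1) (τ : Fin m → Bool) :
    param m δ τ ∈ simplex (m + m) := by
  refine ⟨fun j => ?_, ?_⟩
  · cases j using Fin.addCases <;> simp only [param_castAdd, param_natAdd] <;>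
      exact div_nonneg (tilt_nonneg hδ _) (by positivity)
  · simp only [Fin.sum_univ_add, param_castAdd, param_natAdd, ← Finset.sum_add_distrib,
      ← add_div, tilt_add_tilt_not, Finset.sum_const, Finset.card_univ, Fintype.card_fin,
      nsmul_eq_mul]
    field_simp
    ring

def signGuess {m : ℕ} (u : Fin (m + m) → ℝ) (k : Fin m) : Bool :=
  decide (u (Fin.natAdd m k) ≤ u (Fin.castAdd m k))

theorem two_mul_div_le_of_signGuess_ne {m : ℕ} {δ : ℝ} {u : Fin (m + m) → ℝ} {τ : Fin m → Bool}
    {k : Fin m} (h : signGuess u k ≠ τ k) :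
    2 * δ / (m + m) ≤ |u (Fin.castAdd m k) - param m δ τ (Fin.castAdd m k)|
      + |u (Fin.natAdd m k) - param m δ τ (Fin.natAdd m k)| := by
  simp only [param_castAdd, param_natAdd]
  set a := u (Fin.castAdd m k)
  set c := u (Fin.natAdd m k)
  have hgap : (1 + δ) / (m + m) - (1 - δ) / (m + m) = 2 * δ / (m + m) := by ring
  cases hτ : τ k <;> simp only [signGuess, hτ, ne_eq, decide_eq_true_eq, decide_eq_false_iff_not,
    not_le, Bool.not_false, Bool.not_true, tilt_true, tilt_false] at h ⊢
  · linarith [le_abs_self (a - (1 - δ) / (m + m)), neg_le_abs (c - (1 + δ) / (m + m))]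
  · linarith [neg_le_abs (a - (1 + δ) / (m + m)), le_abs_self (c - (1 - δ) / (m + m))]

theorem mul_hammingDist_signGuess_le_dTV {m : ℕ} {δ : ℝ} (u : Fin (m + m) → ℝ)
    (τ : Fin m → Bool) :
    δ / (m + m) * hammingDist (signGuess u) τ ≤ dTV u (param m δ τ) := by
  rw [dTV, Fin.sum_univ_add, ← Finset.sum_add_distrib, Finset.mul_sum, hammingDist,
    Finset.natCast_card_filter, Finset.mul_sum]
  refine Finset.sum_le_sum fun k _ => ?_
  split_ifs with h
  · linarith [two_mul_div_le_of_signGuess_ne (δ := δ) h, mul_div_assoc 2 δ ((m : ℝ) + m)]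
  · simp only [mul_zero]
    positivity

theorem sqrt_tilt_div_mul_tilt_not_div {δ : ℝ} (c : ℝ) (b : Bool) (hc : 0 ≤ c) :
    √(tilt δ b / c * (tilt δ (!b) / c)) = √(1 - δ ^ 2) / c := by
  rw [div_mul_div_comm, tilt_mul_tilt_not, Real.sqrt_div' _ (mul_self_nonneg c),
    Real.sqrt_mul_self hc]

theorem one_sub_sq_div_le_bhattacharyya {m : ℕ} {δ : ℝ} (hδ : |δ| ≤ 1) (τ : Fin m → Bool)
    (k : Fin m) :
    1 - δ ^ 2 / m ≤ bhattacharyya (param m δ τ) (param m δ (flipAt k τ)) := by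
  have hm₀ : (0 : ℝ) < m := Nat.cast_pos.mpr k.pos
  have hm : (0 : ℝ) < m + m := by linarith
  have hpair (l : Fin m) : (1 - if l = k then δ ^ 2 else 0) / m
      ≤ √(param m δ τ (Fin.castAdd m l) * param m δ (flipAt k τ) (Fin.castAdd m l))
        + √(param m δ τ (Fin.natAdd m l) * param m δ (flipAt k τ) (Fin.natAdd m l)) := by
    simp only [param_castAdd, param_natAdd]
    by_cases hl : l = k
    · subst hl
      have hδ₁ : 1 - δ ^ 2 ≤ 1 := by nlinarith
      simp only [flipAt, Function.update_self, Bool.not_not, if_true]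
      rw [sqrt_tilt_div_mul_tilt_not_div _ _ hm.le, mul_comm,
        sqrt_tilt_div_mul_tilt_not_div _ _ hm.le, ← add_div, ← two_mul, ← two_mul (m : ℝ),
        mul_div_mul_left _ _ two_ne_zero]
      exact div_le_div_of_nonneg_right (Real.le_sqrt_self_iff.mpr hδ₁) hm₀.le
    · simp only [flipAt, Function.update_of_ne hl, if_neg hl, sub_zero]
      rw [Real.sqrt_mul_self (div_nonneg (tilt_nonneg hδ _) hm.le),
        Real.sqrt_mul_self (div_nonneg (tilt_nonneg hδ _) hm.le), ← add_div, tilt_add_tilt_not]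
      apply le_of_eq
      field_simp
      norm_num
  calc 1 - δ ^ 2 / m = ∑ l, (1 - if l = k then δ ^ 2 else 0) / m := by
        rw [← Finset.sum_div, Finset.sum_sub_distrib, Finset.sum_ite_eq']
        simp [sub_div, div_self hm₀.ne']
    _ ≤ _ := by
      rw [bhattacharyya, Fin.sum_univ_add, ← Finset.sum_add_distrib]
      exact Finset.sum_le_sum fun l _ => hpair l

theorem exists_le_integral_dTV_param {m n : ℕ} (hm : 0 < m) {δ : ℝ} (hδ₀ : 0 ≤ δ) (hδ₁ : δ ≤ 1)
    (hδn : n * δ ^ 2 ≤ m / 8) (est : (Fin n → Fin (m + m) → ℝ) → Fin (m + m) → ℝ) :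
    ∃ τ, 49 / 512 * δ ≤ ∫ x, dTV (est x) (param m δ τ)
      ∂(Measure.pi fun _ : Fin n => catMeasure (m + m) (param m δ τ)) := by
  have hδ : |δ| ≤ 1 := abs_le.mpr ⟨by linarith, hδ₁⟩
  have hθ (τ : Fin m → Bool) := param_mem_simplex hm hδ τ
  have hoverlap (k : Fin m) (τ : Fin m → Bool) : (1 - 1 / 8) ^ 2 / 2 ≤ ∑ g : Fin n → Fin (m + m),
      min (∏ i, param m δ τ (g i)) (∏ i, param m δ (flipAt k τ) (g i)) := by
    refine sq_one_sub_div_two_le_sum_min_pi (hθ τ).1 (hθ _).1 (hθ τ).2 (hθ _).2 ?_ (by norm_num)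
    rw [Fintype.card_fin]
    have hm₀ : (0 : ℝ) < m := by exact_mod_cast hm
    calc (n : ℝ) * (1 - bhattacharyya (param m δ τ) (param m δ (flipAt k τ)))
        ≤ n * (δ ^ 2 / m) := by
          gcongr
          linarith [one_sub_sq_div_le_bhattacharyya hδ τ k]
      _ ≤ 1 / 8 := by rw [← mul_div_assoc, div_le_iff₀ hm₀]; linarith
  let guess (g : Fin n → Fin (m + m)) := signGuess (est fun i => basisVec (m + m) (g i))
  obtain ⟨τ, hτ⟩ := exists_le_sum_mul_hammingDist hoverlap guess
  refine ⟨τ, ?_⟩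
  rw [integral_pi_catMeasure (hθ τ).1]
  calc 49 / 512 * δ
      = δ / (m + m) * (Fintype.card (Fin m) * ((1 - 1 / 8) ^ 2 / 2) / 2) := by
        rw [Fintype.card_fin]; field_simp; ring
    _ ≤ δ / (m + m) * ∑ g, (∏ i, param m δ τ (g i)) * hammingDist (guess g) τ := by gcongr
    _ ≤ ∑ g : Fin n → Fin (m + m),
          (∏ i, param m δ τ (g i)) * dTV (est fun i => basisVec (m + m) (g i)) (param m δ τ) := by
        rw [Finset.mul_sum]
        refine Finset.sum_le_sum fun g _ => ?_
        rw [mul_left_comm]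
        exact mul_le_mul_of_nonneg_left (mul_hammingDist_signGuess_le_dTV _ τ)
          (Finset.prod_nonneg fun i _ => (hθ τ).1 _)

end Hypercube

open Hypercube in
/-- Minimax lower bound `c·(s/n)^{1/2}` in TV-distance for the outlier-free
categorical model: any uniform upper bound `b` on the risk of an estimator is at
least `c·(s/n)^{1/2}`. -/
theorem minimax_lower_bound_TV_outlier_free :
    ∃ c : ℝ, 0 < c ∧ ∀ s n : ℕ, Even s → 16 ≤ s → s ≤ n →
      ∀ est : (Fin n → Fin s → ℝ) → Fin s → ℝ, Measurable est →
        (∀ x, est x ∈ simplex s) →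
        ∀ b : ℝ,
          (∀ θ : Fin s → ℝ, θ ∈ simplex s →
            ∫ x, dTV (est x) θ ∂(Measure.pi fun _ : Fin n => catMeasure s θ) ≤ b) →
          c * Real.sqrt (s / n) ≤ b := by
  refine ⟨1 / 64, by norm_num, ?_⟩
  rintro s n ⟨m, rfl⟩ hs hsn est - - b hb
  have hm : 0 < m := by omega
  have hn : (0 : ℝ) < n := by exact_mod_cast (show 0 < n by omega)
  have hratio : ((m + m : ℕ) : ℝ) / n ≤ 1 := div_le_one_of_le₀ (by exact_mod_cast hsn) hn.le
  set δ := √(((m + m : ℕ) : ℝ) / n) / 4 with hδ_def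
  have hδn : n * δ ^ 2 = m / 8 := by
    rw [hδ_def, div_pow, Real.sq_sqrt (by positivity)]
    push_cast
    field_simp
    ring
  have hδ₀ : 0 ≤ δ := by positivity
  have hδ₁ : δ ≤ 1 := by linarith [Real.sqrt_le_one.mpr hratio]
  obtain ⟨τ, hτ⟩ := exists_le_integral_dTV_param hm hδ₀ hδ₁ hδn.le est
  calc 1 / 64 * √(((m + m : ℕ) : ℝ) / n) ≤ 49 / 512 * δ := by
        linarith [Real.sqrt_nonneg (((m + m : ℕ) : ℝ) / n)]
    _ ≤ _ := hτ
    _ ≤ b := hb _ (param_mem_simplex hm (abs_le.mpr ⟨by linarith, hδ₁⟩) τ)
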